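/- arXiv:2409.15455 — 6 statements merged into one kernel-verified Lean document; each statement's English description precedes it below -/
import Mathlib

section
/- Every ring of diamonds admits a (1,1,2,2)-packing coloring. -/
open SimpleGraph

/-- A graph is claw-free if it has no induced subgraph isomorphic to `K_{1,3}`. -/
def IsClawFree {V : Type*} (G : SimpleGraph V) : Prop :=
  ¬ ∃ v a b c : V, a ≠ b ∧ a ≠ c ∧ b ≠ c ∧
    G.Adj v a ∧ G.Adj v b ∧ G.Adj v c ∧ ¬ G.Adj a b ∧ ¬ G.Adj a c ∧ ¬ G.Adj b c

/-- A `(1,1,2,2)`-packing coloring of `G`: a partition of the vertex set (given by a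
function to `Fin 4`) into two independent sets (colors `0`, `1`) and two `2`-packings
(colors `2`, `3`), i.e. sets of vertices pairwise at distance greater than `2`. -/
def IsColoring1122 {V : Type*} (G : SimpleGraph V) (f : V → Fin 4) : Prop :=
  (∀ u v : V, f u = 0 → f v = 0 → ¬ G.Adj u v) ∧
  (∀ u v : V, f u = 1 → f v = 1 → ¬ G.Adj u v) ∧
  (∀ u v : V, u ≠ v → f u = 2 → f v = 2 → 2 < G.edist u v) ∧
  (∀ u v : V, u ≠ v → f u = 3 → f v = 3 → 2 < G.edist u v)

/-- The ring of `k` diamonds: for each `i : ZMod k` a diamond on vertices `(i,0),(i,1),(i,2),(i,3)`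
(with `(i,1),(i,2)` internal, i.e. all pairs adjacent except `(i,0),(i,3)`), and an edge joining
the external vertex `(i,3)` of the `i`-th diamond to the external vertex `(i+1,0)` of the next. -/
def ringOfDiamonds (k : ℕ) : SimpleGraph (ZMod k × Fin 4) :=
  SimpleGraph.fromRel (fun p q =>
    (p.1 = q.1 ∧ ¬(p.2 = 0 ∧ q.2 = 3) ∧ ¬(p.2 = 3 ∧ q.2 = 0)) ∨
    (q.1 = p.1 + 1 ∧ p.2 = 3 ∧ q.2 = 0))

lemma edist_gt_two_of {V : Type*} (G : SimpleGraph V) (u v : V) (hne : u ≠ v)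
    (h1 : ¬ G.Adj u v) (h2 : ∀ w, G.Adj u w → ¬ G.Adj w v) : 2 < G.edist u v := by
  by_contra h
  push_neg at h
  have htop : G.edist u v ≠ ⊤ := fun ht => by simp [ht] at h
  obtain ⟨p, hp⟩ := SimpleGraph.exists_walk_of_edist_ne_top htop
  have hlen : (p.length : ℕ∞) ≤ 2 := hp ▸ h
  have hlen' : p.length ≤ 2 := by exact_mod_cast hlen
  match p, hlen' with
  | SimpleGraph.Walk.nil, _ => exact hne rfl
  | SimpleGraph.Walk.cons h' SimpleGraph.Walk.nil, _ => exact h1 h'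
  | SimpleGraph.Walk.cons h' (SimpleGraph.Walk.cons h'' SimpleGraph.Walk.nil), _ =>
      exact h2 _ h' h''
  | SimpleGraph.Walk.cons _ (SimpleGraph.Walk.cons _ (SimpleGraph.Walk.cons _ _)), hl =>
      simp only [SimpleGraph.Walk.length_cons] at hl; omega

lemma rod_adj {k : ℕ} (p q : ZMod k × Fin 4) :
    (ringOfDiamonds k).Adj p q ↔ p ≠ q ∧
      ((p.1 = q.1 ∧ ¬(p.2 = 0 ∧ q.2 = 3) ∧ ¬(p.2 = 3 ∧ q.2 = 0)) ∨
       (q.1 = p.1 + 1 ∧ p.2 = 3 ∧ q.2 = 0) ∨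
       (q.1 = p.1 ∧ ¬(q.2 = 0 ∧ p.2 = 3) ∧ ¬(q.2 = 3 ∧ p.2 = 0)) ∨
       (p.1 = q.1 + 1 ∧ q.2 = 3 ∧ p.2 = 0)) := by
  rw [ringOfDiamonds, SimpleGraph.fromRel_adj]
  refine and_congr_right fun _ => ?_
  rw [or_assoc]

/-- Every ring of diamonds admits a `(1,1,2,2)`-packing coloring. -/
theorem ringOfDiamonds_is_1122_colorable (k : ℕ) (hk : 2 ≤ k) :
    ∃ f : ZMod k × Fin 4 → Fin 4, IsColoring1122 (ringOfDiamonds k) f := by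
  refine ⟨fun p => ![0, 2, 3, 1] p.2, ?_, ?_, ?_, ?_⟩
  · -- color 0 : position 0
    rintro ⟨i, a⟩ ⟨j, b⟩ ha hb hadj
    have ha' : a = 0 := by fin_cases a <;> simp_all
    have hb' : b = 0 := by fin_cases b <;> simp_all
    subst ha' hb'
    rw [rod_adj] at hadj
    obtain ⟨hne, h⟩ := hadj
    rcases h with ⟨h1, -, -⟩ | ⟨-, h2, -⟩ | ⟨h1, -, -⟩ | ⟨-, h2, -⟩
    · exact hne (by simp_all)
    · simp at h2
    · exact hne (by simp_all)
    · simp at h2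
  · -- color 1 : position 3
    rintro ⟨i, a⟩ ⟨j, b⟩ ha hb hadj
    have ha' : a = 3 := by fin_cases a <;> simp_all
    have hb' : b = 3 := by fin_cases b <;> simp_all
    subst ha' hb'
    rw [rod_adj] at hadj
    obtain ⟨hne, h⟩ := hadj
    rcases h with ⟨h1, -, -⟩ | ⟨-, -, h2⟩ | ⟨h1, -, -⟩ | ⟨-, -, h2⟩
    · exact hne (by simp_all)
    · simp at h2
    · exact hne (by simp_all)
    · simp at h2
  · -- color 2 : position 1
    rintro ⟨i, a⟩ ⟨j, b⟩ hne ha hb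
    have ha' : a = 1 := by fin_cases a <;> simp_all
    have hb' : b = 1 := by fin_cases b <;> simp_all
    subst ha' hb'
    have hij : i ≠ j := fun h => hne (by simp [h])
    refine edist_gt_two_of _ _ _ hne ?_ ?_
    · rw [rod_adj]
      rintro ⟨-, h⟩
      rcases h with ⟨h1, -⟩ | ⟨-, h2, -⟩ | ⟨h1, -⟩ | ⟨-, h2, -⟩ <;>
        first | exact hij h1 | exact hij h1.symm | simp at h2
    · rintro ⟨x, c⟩ h1 h2
      rw [rod_adj] at h1 h2
      obtain ⟨-, h1⟩ := h1
      obtain ⟨-, h2⟩ := h2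
      have hx1 : x = i := by
        rcases h1 with ⟨h, -⟩ | ⟨-, h, -⟩ | ⟨h, -⟩ | ⟨-, -, h⟩ <;> simp_all
      have hx2 : x = j := by
        rcases h2 with ⟨h, -⟩ | ⟨-, -, h⟩ | ⟨h, -⟩ | ⟨-, h, -⟩ <;> simp_all
      exact hij (hx1 ▸ hx2)
  · -- color 3 : position 2
    rintro ⟨i, a⟩ ⟨j, b⟩ hne ha hb
    have ha' : a = 2 := by fin_cases a <;> simp_all
    have hb' : b = 2 := by fin_cases b <;> simp_all
    subst ha' hb'
    have hij : i ≠ j := fun h => hne (by simp [h])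
    refine edist_gt_two_of _ _ _ hne ?_ ?_
    · rw [rod_adj]
      rintro ⟨-, h⟩
      rcases h with ⟨h1, -⟩ | ⟨-, h2, -⟩ | ⟨h1, -⟩ | ⟨-, h2, -⟩ <;>
        first | exact hij h1 | exact hij h1.symm | simp at h2
    · rintro ⟨x, c⟩ h1 h2
      rw [rod_adj] at h1 h2
      obtain ⟨-, h1⟩ := h1
      obtain ⟨-, h2⟩ := h2
      have hx1 : x = i := by
        rcases h1 with ⟨h, -⟩ | ⟨-, h, -⟩ | ⟨h, -⟩ | ⟨-, -, h⟩ <;> simp_all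
      have hx2 : x = j := by
        rcases h2 with ⟨h, -⟩ | ⟨-, -, h⟩ | ⟨h, -⟩ | ⟨-, h, -⟩ <;> simp_all
      exact hij (hx1 ▸ hx2)
end

section
/- Let G be a 2-edge-connected cubic multigraph with an even number of vertices. Then for every edge e of G, there is a 2-factor of G containing e. -/
/-- A loopless multigraph: a set of edges `E`, each with two distinct endpoints in `V`. -/
structure Multigraph (V : Type*) (E : Type*) where
  ends : E → Sym2 V
  loopless : ∀ e : E, ¬ (ends e).IsDiag

namespace Multigraph

variable {V E : Type*}

/-- `u` and `v` are joined by a walk using only edges from `S`. -/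
def Connects (M : Multigraph V E) (S : Set E) (u v : V) : Prop :=
  Relation.ReflTransGen (fun a b => ∃ e ∈ S, M.ends e = s(a, b)) u v

/-- The multigraph is connected using only the edges in `S`. -/
def ConnectedOn (M : Multigraph V E) (S : Set E) : Prop :=
  ∀ u v : V, M.Connects S u v

/-- The multigraph is connected. -/
def Connected (M : Multigraph V E) : Prop := M.ConnectedOn Set.univ

/-- An edge is a bridge if its deletion disconnects its endpoints. -/
def IsBridge (M : Multigraph V E) (e : E) : Prop :=
  ∀ u v : V, M.ends e = s(u, v) → ¬ M.Connects {e' | e' ≠ e} u v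

/-- The degree of a vertex: the number of edges incident with it. -/
noncomputable def degree (M : Multigraph V E) (v : V) : ℕ :=
  {e : E | v ∈ M.ends e}.ncard

/-- The multigraph is cubic: every vertex has degree `3`. -/
def IsCubic (M : Multigraph V E) : Prop := ∀ v : V, M.degree v = 3

/-- A `2`-factor: a set of edges in which every vertex lies on exactly two edges,
i.e. a spanning `2`-regular subgraph. -/
def IsTwoFactor (M : Multigraph V E) (F : Set E) : Prop :=
  ∀ v : V, {e : E | e ∈ F ∧ v ∈ M.ends e}.ncard = 2

end Multigraph

/-!
The complement of a perfect matching of a cubic graph is a `2`-factor, so it suffices to find a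
perfect matching avoiding `e`, i.e. one of the simple graph `H` spanned by the other edges. This is
Plesník's argument through Tutte's theorem. Let `U` be a set of vertices and `C` an odd component
of `H - U`. Counting degrees, the number of edges of `M` leaving `C` has the parity of `3 |C|`, so
it is odd, and it is not `1` since `M` has no bridge: at least three edges leave `C`. All of them
except possibly `e` end in `U`, which meets at most `3 |U|` edges, and `e` leaves at most two
components. Hence `3 · odd(H - U) ≤ 3 |U| + 2`, that is `odd(H - U) ≤ |U|`.
-/

open SimpleGraph

namespace Multigraph

variable {V E : Type*} {M : Multigraph V E}

lemma exists_ne_ends_eq (M : Multigraph V E) (g : E) : ∃ a b, a ≠ b ∧ M.ends g = s(a, b) := by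
  induction h : M.ends g using Sym2.ind with
  | _ a b => exact ⟨a, b, fun hab => M.loopless g (by simp [h, hab]), rfl⟩

def graphOn (M : Multigraph V E) (S : Set E) : SimpleGraph V where
  Adj a b := ∃ g ∈ S, M.ends g = s(a, b)
  symm := ⟨fun _ _ ⟨g, hg, h⟩ => ⟨g, hg, h.trans Sym2.eq_swap⟩⟩
  loopless := ⟨fun a ⟨g, _, h⟩ => M.loopless g (by simp [h])⟩

lemma connects_iff_reachable {S : Set E} {u v : V} :
    M.Connects S u v ↔ (M.graphOn S).Reachable u v :=
  ((M.graphOn S).reachable_iff_reflTransGen u v).symm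

lemma mem_edgeSet_graphOn {S : Set E} {p : Sym2 V} :
    p ∈ (M.graphOn S).edgeSet ↔ ∃ g ∈ S, M.ends g = p := by
  induction p using Sym2.ind with
  | _ a b => rfl

def edgeBoundary (M : Multigraph V E) (C : Set V) : Set E :=
  {g | {v ∈ C | v ∈ M.ends g}.ncard = 1}

lemma mem_edgeBoundary_iff {C : Set V} {g : E} :
    g ∈ M.edgeBoundary C ↔ ∃ a b, M.ends g = s(a, b) ∧ a ∈ C ∧ b ∉ C := by
  constructor
  · intro h
    obtain ⟨a, ha⟩ := Set.ncard_eq_one.mp h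
    have haC : a ∈ {v ∈ C | v ∈ M.ends g} := by rw [ha]; rfl
    obtain ⟨b, hab⟩ := Sym2.mem_iff_exists.mp haC.2
    refine ⟨a, b, hab, haC.1, fun hbC => M.loopless g ?_⟩
    have hba : b ∈ ({a} : Set V) := ha ▸ ⟨hbC, hab ▸ Sym2.mem_mk_right a b⟩
    rw [hab, hba]
    exact Sym2.mk_isDiag_iff.mpr rfl
  · rintro ⟨a, b, hab, ha, hb⟩
    refine Set.ncard_eq_one.mpr ⟨a, Set.ext fun v => ?_⟩
    simp only [Set.mem_ofPred_eq, hab, Sym2.mem_iff, Set.mem_singleton_iff]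
    constructor
    · rintro ⟨hv, rfl | rfl⟩
      · rfl
      · exact absurd hv hb
    · rintro rfl
      exact ⟨ha, Or.inl rfl⟩

lemma mem_or_mem_of_mem_edgeBoundary_of_disjoint {C D : Set V} {g : E}
    (hC : g ∈ M.edgeBoundary C) (hD : g ∈ M.edgeBoundary D) (hCD : Disjoint C D) {v : V}
    (hv : v ∈ M.ends g) : v ∈ C ∨ v ∈ D := by
  obtain ⟨a, b, hab, ha, -⟩ := mem_edgeBoundary_iff.mp hC
  obtain ⟨a', b', hab', ha', -⟩ := mem_edgeBoundary_iff.mp hD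
  have ha'b : a' = b := by
    have : a' ∈ s(a, b) := hab ▸ hab' ▸ Sym2.mem_mk_left a' b'
    rcases Sym2.mem_iff.mp this with rfl | rfl
    · exact absurd ha' (Set.disjoint_left.mp hCD ha)
    · rfl
  rw [hab, Sym2.mem_iff] at hv
  rcases hv with rfl | rfl
  · exact Or.inl ha
  · exact Or.inr (ha'b ▸ ha')

lemma Connects.exists_mem_edgeBoundary {S : Set E} {C : Set V} {a b : V} (h : M.Connects S a b)
    (ha : a ∈ C) (hb : b ∉ C) : ∃ g ∈ S, g ∈ M.edgeBoundary C := by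
  induction h with
  | refl => exact absurd ha hb
  | @tail c d _ hcd ih =>
    by_cases hc : c ∈ C
    · obtain ⟨g, hgS, hg⟩ := hcd
      exact ⟨g, hgS, mem_edgeBoundary_iff.mpr ⟨c, d, hg, hc, hb⟩⟩
    · exact ih hc

lemma ncard_edgeBoundary_ne_one (hbridgeless : ∀ e : E, ¬ M.IsBridge e) (C : Set V) :
    (M.edgeBoundary C).ncard ≠ 1 := by
  intro h
  obtain ⟨f, hf⟩ := Set.ncard_eq_one.mp h
  obtain ⟨a, b, hab, ha, hb⟩ := mem_edgeBoundary_iff.mp (hf ▸ rfl : f ∈ M.edgeBoundary C)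
  have hconn : M.Connects {g | g ≠ f} a b := by
    by_contra hnot
    refine hbridgeless f fun u v huv => ?_
    rcases Sym2.eq_iff.mp (huv.symm.trans hab) with ⟨rfl, rfl⟩ | ⟨rfl, rfl⟩
    · exact hnot
    · exact fun h' => hnot (connects_iff_reachable.mpr (connects_iff_reachable.mp h').symm)
  obtain ⟨g, hgf, hg⟩ := hconn.exists_mem_edgeBoundary ha hb
  exact hgf (by rwa [hf] at hg)

lemma ncard_mem_ends_le_two (C : Set V) (g : E) : {v ∈ C | v ∈ M.ends g}.ncard ≤ 2 := by
  obtain ⟨a, b, hab, hg⟩ := M.exists_ne_ends_eq g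
  calc {v ∈ C | v ∈ M.ends g}.ncard ≤ ({a, b} : Set V).ncard :=
        Set.ncard_le_ncard (fun v hv => by simpa [hg] using hv.2)
    _ = 2 := Set.ncard_pair hab

open scoped Classical in
lemma card_filter_mem_edgeBoundary_le_two {ι : Type*} {I : Finset ι} {C : ι → Set V}
    (hdisj : (I : Set ι).PairwiseDisjoint C) (e : E) :
    (I.filter fun i => e ∈ M.edgeBoundary (C i)).card ≤ 2 := by
  obtain ⟨a, b, hab, he⟩ := M.exists_ne_ends_eq e
  calc (I.filter fun i => e ∈ M.edgeBoundary (C i)).card ≤ ({a, b} : Finset V).card := by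
        refine Finset.card_le_card_of_forall_subsingleton (fun i v => v ∈ C i) ?_ ?_
        · intro i hi
          obtain ⟨x, y, hxy, hx, -⟩ := mem_edgeBoundary_iff.mp (Finset.mem_filter.mp hi).2
          refine ⟨x, ?_, hx⟩
          have : x ∈ s(a, b) := he ▸ hxy ▸ Sym2.mem_mk_left x y
          simpa [Sym2.mem_iff] using this
        · intro v _ i ⟨hi, hvi⟩ j ⟨hj, hvj⟩
          by_contra hij
          exact Set.disjoint_left.mp (hdisj (Finset.mem_filter.mp hi).1
            (Finset.mem_filter.mp hj).1 hij) hvi hvj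
    _ = 2 := Finset.card_pair hab

section Finite

variable [Fintype V] [Fintype E]

lemma sum_degree_eq_sum_ncard (C : Finset V) :
    ∑ v ∈ C, M.degree v = ∑ g, {v ∈ (C : Set V) | v ∈ M.ends g}.ncard := by
  classical
  simp only [degree, Set.ncard_eq_toFinset_card', Set.toFinset_ofPred, Finset.card_filter]
  rw [Finset.sum_comm]
  refine Finset.sum_congr rfl fun g _ => ?_
  rw [← Finset.sum_filter, ← Finset.sum_filter]
  congr 1
  ext v
  simp

lemma IsCubic.ncard_edgeBoundary_mod_two (hcubic : M.IsCubic) (C : Set V) :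
    (M.edgeBoundary C).ncard % 2 = C.ncard % 2 := by
  classical
  have hsum := M.sum_degree_eq_sum_ncard C.toFinset
  rw [Finset.sum_congr rfl fun v _ => hcubic v, Finset.sum_const, smul_eq_mul,
    ← Set.ncard_eq_toFinset_card', Set.coe_toFinset] at hsum
  have hmod : ∀ g, {v ∈ C | v ∈ M.ends g}.ncard % 2
      = if {v ∈ C | v ∈ M.ends g}.ncard = 1 then 1 else 0 := fun g => by
    have := M.ncard_mem_ends_le_two C g
    interval_cases {v ∈ C | v ∈ M.ends g}.ncard <;> rfl
  rw [edgeBoundary, Set.ncard_eq_toFinset_card', Set.toFinset_ofPred, Finset.card_filter,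
    ← Finset.sum_congr rfl fun g _ => hmod g, ← Finset.sum_nat_mod, ← hsum]
  omega

lemma three_le_ncard_edgeBoundary (hbridgeless : ∀ e : E, ¬ M.IsBridge e)
    (hcubic : M.IsCubic) {C : Set V} (hC : Odd C.ncard) : 3 ≤ (M.edgeBoundary C).ncard := by
  have hpar := hcubic.ncard_edgeBoundary_mod_two C
  have hne := ncard_edgeBoundary_ne_one hbridgeless C
  rw [Nat.odd_iff] at hC
  omega

lemma IsCubic.ncard_incident_le (hcubic : M.IsCubic) (U : Set V) :
    {g | ∃ v ∈ U, v ∈ M.ends g}.ncard ≤ 3 * U.ncard := by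
  classical
  calc {g | ∃ v ∈ U, v ∈ M.ends g}.ncard
      = (U.toFinset.biUnion fun v => {g | v ∈ M.ends g}.toFinset).card := by
        rw [Set.ncard_eq_toFinset_card']
        congr 1
        ext g
        simp
    _ ≤ ∑ v ∈ U.toFinset, {g | v ∈ M.ends g}.toFinset.card := Finset.card_biUnion_le
    _ = 3 * U.ncard := by
        simp_rw [← Set.ncard_eq_toFinset_card']
        simp only [show ∀ v, {g | v ∈ M.ends g}.ncard = 3 from hcubic]
        rw [Finset.sum_const, smul_eq_mul,
          ← Set.ncard_eq_toFinset_card', mul_comm]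

lemma sum_ncard_edgeBoundary_sdiff_le {ι : Type*} (hcubic : M.IsCubic) (e : E) {U : Set V}
    {I : Finset ι} {C : ι → Set V} (hdisj : (I : Set ι).PairwiseDisjoint C)
    (hU : ∀ i ∈ I, Disjoint (C i) U)
    (hout : ∀ i ∈ I, ∀ g ∈ M.edgeBoundary (C i), g ≠ e → ∃ v ∈ U, v ∈ M.ends g) :
    ∑ i ∈ I, (M.edgeBoundary (C i) \ {e}).ncard ≤ 3 * U.ncard := by
  classical
  have hdisj' : (I : Set ι).PairwiseDisjoint fun i => (M.edgeBoundary (C i) \ {e}).toFinset := by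
    intro i hi j hj hij
    refine Set.disjoint_toFinset.mpr (Set.disjoint_left.mpr fun g ⟨hgi, hge⟩ ⟨hgj, _⟩ => ?_)
    obtain ⟨v, hvU, hv⟩ := hout i hi g hgi hge
    rcases mem_or_mem_of_mem_edgeBoundary_of_disjoint hgi hgj (hdisj hi hj hij) hv with h | h
    · exact Set.disjoint_left.mp (hU i hi) h hvU
    · exact Set.disjoint_left.mp (hU j hj) h hvU
  calc ∑ i ∈ I, (M.edgeBoundary (C i) \ {e}).ncard
      = (I.biUnion fun i => (M.edgeBoundary (C i) \ {e}).toFinset).card := by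
        rw [Finset.card_biUnion hdisj']
        simp only [Set.ncard_eq_toFinset_card']
    _ ≤ {g | ∃ v ∈ U, v ∈ M.ends g}.toFinset.card := Finset.card_le_card fun g hg => by
        obtain ⟨i, hi, hg⟩ := Finset.mem_biUnion.mp hg
        obtain ⟨hgi, hge⟩ := Set.mem_toFinset.mp hg
        exact Set.mem_toFinset.mpr (hout i hi g hgi hge)
    _ ≤ 3 * U.ncard := by
        rw [← Set.ncard_eq_toFinset_card']
        exact hcubic.ncard_incident_le U

lemma card_le_ncard_of_three_le_ncard_edgeBoundary {ι : Type*} (hcubic : M.IsCubic) (e : E)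
    {U : Set V} {I : Finset ι} {C : ι → Set V} (hdisj : (I : Set ι).PairwiseDisjoint C)
    (hU : ∀ i ∈ I, Disjoint (C i) U) (hbd : ∀ i ∈ I, 3 ≤ (M.edgeBoundary (C i)).ncard)
    (hout : ∀ i ∈ I, ∀ g ∈ M.edgeBoundary (C i), g ≠ e → ∃ v ∈ U, v ∈ M.ends g) :
    I.card ≤ U.ncard := by
  classical
  have hsplit : ∀ i, (M.edgeBoundary (C i)).ncard
      = (M.edgeBoundary (C i) \ {e}).ncard + if e ∈ M.edgeBoundary (C i) then 1 else 0 := by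
    intro i
    split_ifs with he
    · exact (Set.ncard_sdiff_singleton_add_one he).symm
    · rw [Set.sdiff_singleton_eq_self he, add_zero]
  have : 3 * I.card ≤ 3 * U.ncard + 2 :=
    calc 3 * I.card = ∑ _i ∈ I, 3 := by rw [Finset.sum_const, smul_eq_mul, mul_comm]
      _ ≤ ∑ i ∈ I, (M.edgeBoundary (C i)).ncard := Finset.sum_le_sum hbd
      _ = ∑ i ∈ I, (M.edgeBoundary (C i) \ {e}).ncard
          + (I.filter fun i => e ∈ M.edgeBoundary (C i)).card := by
        rw [Finset.sum_congr rfl fun i _ => hsplit i, Finset.sum_add_distrib, Finset.card_filter]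
      _ ≤ 3 * U.ncard + 2 := add_le_add (sum_ncard_edgeBoundary_sdiff_le hcubic e hdisj hU hout)
          (card_filter_mem_edgeBoundary_le_two hdisj e)
  omega

lemma not_isTutteViolator_graphOn_ne (hbridgeless : ∀ e : E, ¬ M.IsBridge e)
    (hcubic : M.IsCubic) (e : E) (U : Set V) : ¬ (M.graphOn {g | g ≠ e}).IsTutteViolator U := by
  set K := ((⊤ : (M.graphOn {g | g ≠ e}).Subgraph).deleteVerts U).coe
  set C : K.ConnectedComponent → Set V := fun c => Subtype.val '' c.supp
  rw [IsTutteViolator, not_lt, Set.ncard_eq_toFinset_card _ (Set.toFinite _)]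
  refine card_le_ncard_of_three_le_ncard_edgeBoundary (C := C) hcubic e ?_ ?_ ?_ ?_
  · intro c _ d _ hcd
    exact (Set.disjoint_image_iff Subtype.val_injective).mpr
      (pairwise_disjoint_supp_connectedComponent K hcd)
  · intro c _
    refine Set.disjoint_left.mpr ?_
    rintro - ⟨⟨v, hv⟩, -, rfl⟩ hvU
    exact hv.2 hvU
  · intro c hc
    refine three_le_ncard_edgeBoundary hbridgeless hcubic ?_
    rw [Set.ncard_image_of_injective _ Subtype.val_injective]
    simpa using hc
  · intro c _ g hg hge
    obtain ⟨a, b, hab, ha, hb⟩ := mem_edgeBoundary_iff.mp hg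
    refine ⟨b, ?_, by simp [hab]⟩
    have haU : a ∉ U := by
      obtain ⟨⟨_, hv⟩, -, rfl⟩ := ha
      exact hv.2
    by_contra hbU
    exact hb (ConnectedComponent.mem_coe_supp_of_adj ha ⟨trivial, hbU⟩
      (Subgraph.deleteVerts_adj.mpr ⟨trivial, haU, trivial, hbU, g, hge, hab⟩))

end Finite

def IsPerfectMatching (M : Multigraph V E) (N : Set E) : Prop :=
  ∀ v : V, {g | g ∈ N ∧ v ∈ M.ends g}.ncard = 1

lemma exists_isPerfectMatching_subset {S : Set E} {N : (M.graphOn S).Subgraph}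
    (hN : N.IsPerfectMatching) : ∃ F ⊆ S, M.IsPerfectMatching F := by
  choose pick hpickS hpick using fun p : N.edgeSet => mem_edgeSet_graphOn.mp (N.edgeSet_subset p.2)
  refine ⟨Set.range pick, Set.range_subset_iff.mpr hpickS, fun v => ?_⟩
  obtain ⟨w, hvw, hw⟩ := Subgraph.isPerfectMatching_iff.mp hN v
  suffices {g | g ∈ Set.range pick ∧ v ∈ M.ends g} = {pick ⟨s(v, w), hvw⟩} by
    rw [this, Set.ncard_singleton]
  ext g
  simp only [Set.mem_ofPred_eq, Set.mem_singleton_iff]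
  constructor
  · rintro ⟨⟨⟨p, hp⟩, rfl⟩, hv⟩
    rw [hpick] at hv
    obtain ⟨x, rfl⟩ := Sym2.mem_iff_exists.mp hv
    obtain rfl := hw x hp
    rfl
  · rintro rfl
    exact ⟨⟨_, rfl⟩, by simp [hpick]⟩

lemma IsPerfectMatching.isTwoFactor_compl [Finite E] {N : Set E} (hcubic : M.IsCubic)
    (hN : M.IsPerfectMatching N) : M.IsTwoFactor Nᶜ := by
  intro v
  have : {g | g ∈ Nᶜ ∧ v ∈ M.ends g} = {g | v ∈ M.ends g} \ {g | g ∈ N ∧ v ∈ M.ends g} := by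
    ext g
    simp only [Set.mem_ofPred_eq, Set.mem_compl_iff, Set.mem_sdiff]
    tauto
  rw [this, Set.ncard_sdiff fun g hg => hg.2, hN v, show {g | v ∈ M.ends g}.ncard = 3 from hcubic v]

end Multigraph

theorem two_factor_through_edge_general {V E : Type*} [Fintype V] [Fintype E]
    (M : Multigraph V E) (hbridgeless : ∀ e : E, ¬ M.IsBridge e)
    (hcubic : M.IsCubic) (e : E) :
    ∃ F : Set E, M.IsTwoFactor F ∧ e ∈ F := by
  obtain ⟨N, hN⟩ := tutte.mpr (M.not_isTutteViolator_graphOn_ne hbridgeless hcubic e)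
  obtain ⟨F, hFS, hF⟩ := M.exists_isPerfectMatching_subset hN
  exact ⟨Fᶜ, hF.isTwoFactor_compl hcubic, fun he => hFS he rfl⟩

/-- In a `2`-edge-connected cubic multigraph with an even number of vertices, every edge
lies in some `2`-factor. -/
theorem two_factor_through_edge {V E : Type*} [Fintype V] [Fintype E]
    (M : Multigraph V E) (hconn : M.Connected) (hbridgeless : ∀ e : E, ¬ M.IsBridge e)
    (hcubic : M.IsCubic) (heven : Even (Fintype.card V)) (e : E) :
    ∃ F : Set E, M.IsTwoFactor F ∧ e ∈ F :=
  two_factor_through_edge_general M hbridgeless hcubic e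
end

section
/- Let G be a connected claw-free cubic graph with bridge set B(G), and let H be a connected component of G - B(G). Then H has no vertex of degree at most 1 in H; in particular, if H has more than one vertex, then every vertex of H has degree at least 2 in H. -/
/-!
An edge lying on a triangle is never a bridge. So if two edges `vx`, `vy` at a vertex `v` of a
claw-free graph were bridges, then together with any third neighbour `z` of `v` the vertices
`x, y, z` would be pairwise non-adjacent, i.e. `v` would be the centre of a claw. Hence every
vertex loses at most one of its three edges when the bridges of a cubic claw-free graph are
deleted.
-/

open SimpleGraph

/-- `G - B(G)`: the graph obtained from `G` by deleting all of its bridges. -/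
def bridgeFree {V : Type*} (G : SimpleGraph V) : SimpleGraph V :=
  G.deleteEdges {e | G.IsBridge e}

section

variable {V : Type*} {G : SimpleGraph V} {u v w x y z : V}

lemma SimpleGraph.not_isBridge_of_mem_commonNeighbors (hw : w ∈ G.commonNeighbors u v) :
    ¬ G.IsBridge s(u, v) := by
  obtain ⟨huw, hvw⟩ := G.mem_commonNeighbors.mp hw
  rw [isBridge_iff, not_not]
  have huw' : (G.deleteEdges {s(u, v)}).Adj u w := by
    simp [huw, huw.ne', hvw.ne']
  have hwv' : (G.deleteEdges {s(u, v)}).Adj w v := by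
    simp [hvw.symm, huw.ne', hvw.ne']
  exact huw'.reachable.trans hwv'.reachable

lemma IsClawFree.eq_of_isBridge (hG : IsClawFree G) (hx : G.Adj v x) (hy : G.Adj v y)
    (hz : G.Adj v z) (hxz : x ≠ z) (hyz : y ≠ z) (hbx : G.IsBridge s(v, x))
    (hby : G.IsBridge s(v, y)) : x = y := by
  by_contra hxy
  exact hG ⟨v, x, y, z, hxy, hxz, hyz, hx, hy, hz,
    fun hxy => not_isBridge_of_mem_commonNeighbors (G.mem_commonNeighbors.mpr ⟨hy, hxy⟩) hbx,
    fun hxz => not_isBridge_of_mem_commonNeighbors (G.mem_commonNeighbors.mpr ⟨hz, hxz⟩) hbx,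
    fun hyz => not_isBridge_of_mem_commonNeighbors (G.mem_commonNeighbors.mpr ⟨hz, hyz⟩) hby⟩

lemma neighborSet_bridgeFree (G : SimpleGraph V) (v : V) :
    (bridgeFree G).neighborSet v = G.neighborSet v \ {w | G.IsBridge s(v, w)} := by
  ext w
  simp [bridgeFree]

lemma IsClawFree.ncard_neighborSet_le_ncard_neighborSet_bridgeFree_add_one (hG : IsClawFree G)
    (hv : 3 ≤ (G.neighborSet v).ncard) :
    (G.neighborSet v).ncard ≤ ((bridgeFree G).neighborSet v).ncard + 1 := by
  rw [neighborSet_bridgeFree, ← Set.sdiff_inter_self_eq_sdiff]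
  set N := G.neighborSet v
  set B := {w | G.IsBridge s(v, w)} ∩ N
  have hN : N.Finite := Set.finite_of_ncard_pos (by omega)
  have hB : B.ncard ≤ 1 := by
    refine (Set.ncard_le_one (hN.subset Set.inter_subset_right)).mpr ?_
    rintro x ⟨hbx, hx⟩ y ⟨hby, hy⟩
    have hxy : ({x, y} : Set V).ncard < N.ncard :=
      (Set.ncard_insert_le x {y}).trans_lt (by rw [Set.ncard_singleton]; omega)
    obtain ⟨z, hz, hzxy⟩ := Set.exists_mem_notMem_of_ncard_lt_ncard hxy
    simp only [Set.mem_insert_iff, Set.mem_singleton_iff, not_or] at hzxy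
    exact hG.eq_of_isBridge hx hy hz (Ne.symm hzxy.1) (Ne.symm hzxy.2) hbx hby
  have := Set.ncard_le_ncard_sdiff_add_ncard N B (hN.subset Set.inter_subset_right)
  omega

end

theorem component_min_degree_two_general {V : Type*} [Fintype V]
    (G : SimpleGraph V) [DecidableRel G.Adj]
    (hcubic : ∀ v : V, G.degree v = 3) (hclawfree : IsClawFree G) :
    ∀ v : V, 2 ≤ ((bridgeFree G).neighborSet v).ncard := by
  intro v
  have h3 : (G.neighborSet v).ncard = 3 := by
    rw [Set.ncard_eq_toFinset_card', Set.toFinset_card, card_neighborSet_eq_degree, hcubic]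
  have := hclawfree.ncard_neighborSet_le_ncard_neighborSet_bridgeFree_add_one h3.ge
  omega

/-- In a connected claw-free cubic graph `G`, no component of `G - B(G)` has a vertex of
degree at most `1` within that component: every vertex has at least two neighbors in
`G - B(G)` (all of which lie in its component). -/
theorem component_min_degree_two {V : Type*} [Fintype V] [DecidableEq V]
    (G : SimpleGraph V) [DecidableRel G.Adj]
    (hconn : G.Connected) (hcubic : ∀ v : V, G.degree v = 3) (hclawfree : IsClawFree G) :
    ∀ v : V, 2 ≤ ((bridgeFree G).neighborSet v).ncard :=
  component_min_degree_two_general G hcubic hclawfree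
end

section
/- Let G be a connected claw-free cubic graph with bridge set B(G). If a connected component of G - B(G) is a cycle, then it is a triangle (a cycle of length 3). -/
/-!
Let `v` lie on a component of `G - B(G)` that is a cycle. Two of the three edges at `v` survive,
to neighbours `a` and `b`, so the third edge `vc` is a bridge. A bridge lies on no cycle, so `c` is
adjacent to neither `a` nor `b`, and claw-freeness at `v` forces `a ~ b`. The triangle `vab` has
no bridge, so it lies in `G - B(G)`; as every vertex of the component has degree two there, the
triangle is closed under adjacency and is the whole component.
-/

open SimpleGraph

namespace SimpleGraph

variable {V : Type*}

lemma bridgeFree_adj {G : SimpleGraph V} {x y : V} :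
    (bridgeFree G).Adj x y ↔ G.Adj x y ∧ ¬ G.IsBridge s(x, y) := by
  simp [bridgeFree, deleteEdges_adj]

lemma bridgeFree_le (G : SimpleGraph V) : bridgeFree G ≤ G :=
  deleteEdges_le _

lemma not_isBridge_of_adj_of_adj {G : SimpleGraph V} {x y z : V}
    (hxy : G.Adj x y) (hyz : G.Adj y z) (hzx : G.Adj z x) : ¬ G.IsBridge s(x, y) := by
  intro hbridge
  have hcycle : (Walk.cons hxy (Walk.cons hyz (Walk.cons hzx Walk.nil))).IsCycle := by
    simp [Walk.isCycle_def, Walk.isTrail_def, hxy.ne, hyz.ne, hzx.ne, hzx.ne', hxy.ne']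
  exact hbridge.notMem_edges_of_isCycle hcycle (by simp)

lemma bridgeFree_adj_of_adj_of_adj {G : SimpleGraph V} {x y z : V}
    (hxy : G.Adj x y) (hyz : G.Adj y z) (hzx : G.Adj z x) : (bridgeFree G).Adj x y :=
  bridgeFree_adj.mpr ⟨hxy, not_isBridge_of_adj_of_adj hxy hyz hzx⟩

lemma exists_isBridge_of_ncard_neighborSet_bridgeFree_lt [Fintype V] {G : SimpleGraph V}
    [DecidableRel G.Adj] {v : V} (hlt : ((bridgeFree G).neighborSet v).ncard < G.degree v) :
    ∃ c, G.Adj v c ∧ G.IsBridge s(v, c) := by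
  have hncard : (G.neighborSet v).ncard = G.degree v := by
    rw [Set.ncard_eq_toFinset_card', ← neighborFinset_def, card_neighborFinset_eq_degree]
  have hsub : (bridgeFree G).neighborSet v ⊆ G.neighborSet v :=
    neighborSet_mono (bridgeFree_le G) v
  have hne : (bridgeFree G).neighborSet v ≠ G.neighborSet v := by
    intro h
    rw [h, hncard] at hlt
    exact lt_irrefl _ hlt
  obtain ⟨c, hc, hc'⟩ := Set.exists_of_ssubset (hsub.ssubset_of_ne hne)
  refine ⟨c, hc, ?_⟩
  by_contra h
  exact hc' (bridgeFree_adj.mpr ⟨hc, h⟩)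

lemma IsClawFree.adj_of_isBridge {G : SimpleGraph V} (hG : IsClawFree G) {v a b c : V}
    (hab : a ≠ b) (hva : G.Adj v a) (hvb : G.Adj v b) (hvc : G.Adj v c)
    (hbridge : G.IsBridge s(v, c)) (hac : a ≠ c) (hbc : b ≠ c) : G.Adj a b := by
  have hnac : ¬ G.Adj a c := fun h ↦ not_isBridge_of_adj_of_adj hvc h.symm hva.symm hbridge
  have hnbc : ¬ G.Adj b c := fun h ↦ not_isBridge_of_adj_of_adj hvc h.symm hvb.symm hbridge
  by_contra hnab
  exact hG ⟨v, a, b, c, hab, hac, hbc, hva, hvb, hvc, hnab, hnac, hnbc⟩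

lemma IsClawFree.exists_bridgeFree_triangle [Fintype V] {G : SimpleGraph V} [DecidableRel G.Adj]
    (hG : IsClawFree G) {v : V} (hv : G.degree v = 3)
    (hv' : ((bridgeFree G).neighborSet v).ncard = 2) :
    ∃ a b, (bridgeFree G).Adj v a ∧ (bridgeFree G).Adj v b ∧ (bridgeFree G).Adj a b := by
  obtain ⟨c, hvc, hbridge⟩ :=
    exists_isBridge_of_ncard_neighborSet_bridgeFree_lt (show _ < G.degree v by omega)
  obtain ⟨a, b, hab, hN⟩ := Set.ncard_eq_two.mp hv'
  have hva : (bridgeFree G).Adj v a := by simp [← mem_neighborSet, hN]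
  have hvb : (bridgeFree G).Adj v b := by simp [← mem_neighborSet, hN]
  have hac : a ≠ c := by rintro rfl; exact (bridgeFree_adj.mp hva).2 hbridge
  have hbc : b ≠ c := by rintro rfl; exact (bridgeFree_adj.mp hvb).2 hbridge
  have hGva := (bridgeFree_adj.mp hva).1
  have hGvb := (bridgeFree_adj.mp hvb).1
  have hGab := hG.adj_of_isBridge hab hGva hGvb hvc hbridge hac hbc
  exact ⟨a, b, hva, hvb, bridgeFree_adj_of_adj_of_adj hGab hGvb.symm hGva⟩

lemma neighborSet_eq_pair {H : SimpleGraph V} {x y z : V} (hyz : y ≠ z)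
    (hxy : H.Adj x y) (hxz : H.Adj x z) (hx : (H.neighborSet x).ncard = 2) :
    H.neighborSet x = {y, z} := by
  refine (Set.eq_of_subset_of_ncard_le ?_ ?_ (Set.finite_of_ncard_pos (by omega))).symm
  · rintro w (rfl | rfl)
    exacts [hxy, hxz]
  · rw [hx, Set.ncard_pair hyz]

lemma ConnectedComponent.supp_subset_of_forall_adj {H : SimpleGraph V} {s : Set V} {v : V}
    (hv : v ∈ s) (hs : ∀ x ∈ s, ∀ y, H.Adj x y → y ∈ s) :
    (H.connectedComponentMk v).supp ⊆ s := by
  have hwalk : ∀ x y (p : H.Walk x y), x ∈ s → y ∈ s := by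
    intro x y p
    induction p with
    | nil => exact id
    | cons h _ ih => exact fun hx ↦ ih (hs _ hx _ h)
  intro w hw
  obtain ⟨p⟩ := ConnectedComponent.exact hw
  exact hwalk v w p.reverse hv

lemma ConnectedComponent.supp_eq_of_adj_of_adj_of_adj {H : SimpleGraph V} {v a b : V}
    (hdeg : ∀ w ∈ (H.connectedComponentMk v).supp, (H.neighborSet w).ncard = 2)
    (hva : H.Adj v a) (hvb : H.Adj v b) (hab : H.Adj a b) :
    (H.connectedComponentMk v).supp = {v, a, b} := by
  set C := H.connectedComponentMk v
  have hv : v ∈ C.supp := rfl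
  have ha : a ∈ C.supp := C.mem_supp_of_adj_mem_supp hv hva
  have hb : b ∈ C.supp := C.mem_supp_of_adj_mem_supp hv hvb
  have hNv := neighborSet_eq_pair hab.ne hva hvb (hdeg v hv)
  have hNa := neighborSet_eq_pair hvb.ne hva.symm hab (hdeg a ha)
  have hNb := neighborSet_eq_pair hva.ne hvb.symm hab.symm (hdeg b hb)
  refine (supp_subset_of_forall_adj (by simp) ?_).antisymm ?_
  · rintro x (rfl | rfl | rfl) y (hxy : y ∈ H.neighborSet x) <;>
      simp_all only [Set.mem_insert_iff, Set.mem_singleton_iff] <;> tauto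
  · rintro x (rfl | rfl | rfl)
    exacts [hv, ha, hb]

end SimpleGraph

theorem cycle_component_is_triangle_general {V : Type*} [Fintype V]
    (G : SimpleGraph V) [DecidableRel G.Adj]
    (hcubic : ∀ v : V, G.degree v = 3) (hclawfree : IsClawFree G)
    (v : V)
    (hcycle : ∀ w ∈ ((bridgeFree G).connectedComponentMk v).supp,
      ((bridgeFree G).neighborSet w).ncard = 2) :
    ((bridgeFree G).connectedComponentMk v).supp.ncard = 3 := by
  obtain ⟨a, b, hva, hvb, hab⟩ := hclawfree.exists_bridgeFree_triangle (hcubic v) (hcycle v rfl)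
  rw [ConnectedComponent.supp_eq_of_adj_of_adj_of_adj hcycle hva hvb hab, Set.ncard_eq_three]
  exact ⟨v, a, b, hva.ne, hvb.ne, hab.ne, rfl⟩

/-- In a connected claw-free cubic graph `G`, if a connected component of `G - B(G)` is a
cycle (i.e. all of its vertices have degree `2` in the component), then it is a triangle
(it has exactly `3` vertices). -/
theorem cycle_component_is_triangle {V : Type*} [Fintype V] [DecidableEq V]
    (G : SimpleGraph V) [DecidableRel G.Adj]
    (hconn : G.Connected) (hcubic : ∀ v : V, G.degree v = 3) (hclawfree : IsClawFree G)
    (v : V)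
    (hcycle : ∀ w ∈ ((bridgeFree G).connectedComponentMk v).supp,
      ((bridgeFree G).neighborSet w).ncard = 2) :
    ((bridgeFree G).connectedComponentMk v).supp.ncard = 3 :=
  cycle_component_is_triangle_general G hcubic hclawfree v hcycle
end

section
/- Let G be a claw-free cubic graph containing a vertex v of degree 2 in an induced 2-edge-connected subgraph H (with all other vertices of H having degree 3 in H), with neighbors u and w in H. Let s be the neighbor of u in H other than v, w, and let y be the neighbor of w in H other than u, v, and suppose s ≠ y. If s and y are adjacent in G, then s and y have a common neighbor in G. -/
open SimpleGraph

open SimpleGraph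

lemma third_nbr {V : Type*} [Fintype V] [DecidableEq V]
    (G : SimpleGraph V) [DecidableRel G.Adj] {x a b : V}
    (hdeg : G.degree x = 3) (ha : G.Adj x a) (hb : G.Adj x b) (hab : a ≠ b) :
    ∃ t : V, G.Adj x t ∧ t ≠ a ∧ t ≠ b := by
  have h : ((G.neighborFinset x) \ {a, b}).Nonempty := by
    rw [← Finset.card_pos]
    have hsub : ({a, b} : Finset V) ⊆ G.neighborFinset x := by
      intro z hz
      simp only [Finset.mem_insert, Finset.mem_singleton] at hz
      rcases hz with rfl | rfl <;> simp [ha, hb]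
    have := Finset.card_sdiff_of_subset hsub
    have hcard2 : ({a, b} : Finset V).card = 2 := by
      rw [Finset.card_insert_of_notMem (by simp [hab]), Finset.card_singleton]
    rw [this, hcard2]
    have : (G.neighborFinset x).card = 3 := by rw [card_neighborFinset_eq_degree, hdeg]
    omega
  obtain ⟨t, ht⟩ := h
  simp only [Finset.mem_sdiff, mem_neighborFinset, Finset.mem_insert,
    Finset.mem_singleton, not_or] at ht
  exact ⟨t, ht.1, ht.2.1, ht.2.2⟩

lemma nbrs_eq {V : Type*} [Fintype V] [DecidableEq V]
    (G : SimpleGraph V) [DecidableRel G.Adj] {x a b c : V}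
    (hdeg : G.degree x = 3) (ha : G.Adj x a) (hb : G.Adj x b) (hc : G.Adj x c)
    (hab : a ≠ b) (hac : a ≠ c) (hbc : b ≠ c) :
    ∀ t : V, G.Adj x t → t = a ∨ t = b ∨ t = c := by
  have hsub : ({a, b, c} : Finset V) ⊆ G.neighborFinset x := by
    intro z hz
    simp only [Finset.mem_insert, Finset.mem_singleton] at hz
    rcases hz with rfl | rfl | rfl <;> simp [ha, hb, hc]
  have hcard3 : ({a, b, c} : Finset V).card = 3 := by
    rw [Finset.card_insert_of_notMem (by simp [hab, hac]),
      Finset.card_insert_of_notMem (by simp [hbc]), Finset.card_singleton]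
  have hN : (G.neighborFinset x).card = 3 := by rw [card_neighborFinset_eq_degree, hdeg]
  have heq : ({a, b, c} : Finset V) = G.neighborFinset x :=
    Finset.eq_of_subset_of_card_le hsub (by omega)
  intro t ht
  have : t ∈ ({a, b, c} : Finset V) := by rw [heq]; simpa using ht
  simpa using this
/-- Let `G` be a claw-free cubic graph. Inside an induced (2-edge-connected) subgraph,
let `v` have neighbors `u` and `w` (which are adjacent), let `s` be the neighbor of `u`
other than `v, w`, and `y` the neighbor of `w` other than `u, v`, with `s ≠ y`. If `s`
and `y` are adjacent in `G`, then they have a common neighbor in `G`. -/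
theorem adjacent_implies_common_neighbor {V : Type*} [Fintype V] [DecidableEq V]
    (G : SimpleGraph V) [DecidableRel G.Adj]
    (hcubic : ∀ x : V, G.degree x = 3) (hclawfree : IsClawFree G)
    (v u w s y : V)
    (hvu : G.Adj v u) (hvw : G.Adj v w) (huw : G.Adj u w)
    (hus : G.Adj u s) (hwy : G.Adj w y)
    (hsv : s ≠ v) (hsw : s ≠ w) (hyu : y ≠ u) (hyv : y ≠ v) (hsy : s ≠ y)
    (hadj : G.Adj s y) :
    ∃ z : V, G.Adj s z ∧ G.Adj y z := by
  obtain ⟨t, hst, htu, hty⟩ := third_nbr G (hcubic s) hus.symm hadj hyu.symm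
  by_cases huy : G.Adj u y
  · exact ⟨u, hus.symm, huy.symm⟩
  by_cases hyt : G.Adj y t
  · exact ⟨t, hst, hyt⟩
  by_cases hut : G.Adj u t
  · -- t is a neighbor of u, so t ∈ {v, w, s}
    rcases nbrs_eq G (hcubic u) hvu.symm huw hus hvw.ne hsv.symm hsw.symm t hut
      with htv | htw | hts
    · -- t = v, so s is adjacent to v; look at the claw at y
      rw [htv] at hst
      obtain ⟨r, hyr, hrw, hrs⟩ := third_nbr G (hcubic y) hwy.symm hadj.symm hsw.symm
      by_cases hws : G.Adj w s
      · exact ⟨w, hws.symm, hwy.symm⟩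
      by_cases hsr : G.Adj s r
      · exact ⟨r, hsr, hyr⟩
      by_cases hwr : G.Adj w r
      · -- r is a neighbor of w, so r ∈ {v, u, y}
        rcases nbrs_eq G (hcubic w) hvw.symm huw.symm hwy hvu.ne hyv.symm hyu.symm r hwr
          with hrv | hru | hry
        · -- r = v : but v's three neighbors are u, w, s, and y is none of them
          rw [hrv] at hyr
          rcases nbrs_eq G (hcubic v) hvu hvw hst.symm huw.ne hus.ne
            (fun h => hsw h.symm) y hyr.symm with h | h | h
          · exact absurd h hyu
          · exact absurd h (G.ne_of_adj hwy).symm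
          · exact absurd h hsy.symm
        · rw [hru] at hyr
          exact ⟨u, hus.symm, hyr⟩
        · exact absurd hry (G.ne_of_adj hyr).symm
      · exact absurd ⟨y, w, s, r, fun h => hsw h.symm, fun h => hrw h.symm,
          fun h => hrs h.symm, hwy.symm, hadj.symm, hyr, hws, hwr, hsr⟩ hclawfree
    · rw [htw] at hst
      exact ⟨w, hst, hwy.symm⟩
    · exact absurd hts (G.ne_of_adj hst).symm
  · exact absurd ⟨s, u, y, t, hyu.symm, fun h => htu h.symm, fun h => hty h.symm,
      hus.symm, hadj, hst, huy, hut, hyt⟩ hclawfree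
end

section
/- If a graph G admits a (1,1,2,2)-packing coloring, then the subdivision S(G) of G admits a (1,2,3,4,5)-packing coloring; in particular, the packing chromatic number of S(G) is at most 5. -/
/-!
Give every subdivision vertex colour 1 and shift the colours of the original vertices up by
one. Subdivision vertices are pairwise non-adjacent in `S(G)`, hence at distance `≥ 2`.
Distances between original vertices double in `S(G)`, since each step `u – e – w` of a walk
in `S(G)` moves at most one step in `G`. So the two independent sets of the
`(1,1,2,2)`-colouring (`G`-distance `≥ 2`) end up at distance `≥ 4 > 3`, and the two
`2`-packings (`G`-distance `≥ 3`) at distance `≥ 6 > 5`.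
-/

open SimpleGraph

/-- The subdivision `S(G)` of `G`: every edge is replaced by a path of length `2`, with
one new vertex inserted per edge. Vertices are `V ⊕ G.edgeSet`; an original vertex is
adjacent to an edge-vertex exactly when it is an endpoint of that edge. -/
def subdivision {V : Type*} (G : SimpleGraph V) : SimpleGraph (V ⊕ G.edgeSet) :=
  SimpleGraph.fromRel (fun a b => ∃ (v : V) (e : G.edgeSet),
    a = Sum.inl v ∧ b = Sum.inr e ∧ v ∈ (e : Sym2 V))

/-- A `(1,2,3,4,5)`-packing coloring of a graph `G`: vertices of color `i ∈ {1,…,5}`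
(represented by `Fin 5`, index `i-1`) are pairwise at distance greater than `i`. -/
def IsColoring12345 {W : Type*} (G : SimpleGraph W) (f : W → Fin 5) : Prop :=
  ∀ u v : W, u ≠ v → f u = f v → ((f u : ℕ) : ℕ∞) + 1 < G.edist u v

namespace SimpleGraph

variable {V : Type*} {G : SimpleGraph V}

lemma one_lt_edist_of_ne_of_not_adj {u v : V} (hne : u ≠ v) (hadj : ¬ G.Adj u v) :
    1 < G.edist u v :=
  lt_of_not_ge fun h => (edist_le_one_iff_adj_or_eq.mp h).elim hadj hne

lemma edist_le_one_of_mem_edge {u w : V} {e : G.edgeSet} (hu : u ∈ (e : Sym2 V))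
    (hw : w ∈ (e : Sym2 V)) : G.edist u w ≤ 1 := by
  rw [edist_le_one_iff_adj_or_eq]
  by_cases huw : u = w
  · exact .inr huw
  · left
    rw [← mem_edgeSet, ← (Sym2.mem_and_mem_iff huw).mp ⟨hu, hw⟩]
    exact e.2

@[simp]
lemma subdivision_adj_inl_inr {v : V} {e : G.edgeSet} :
    (subdivision G).Adj (.inl v) (.inr e) ↔ v ∈ (e : Sym2 V) := by
  simp [subdivision]

@[simp]
lemma subdivision_adj_inr_inl {v : V} {e : G.edgeSet} :
    (subdivision G).Adj (.inr e) (.inl v) ↔ v ∈ (e : Sym2 V) := by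
  simp [subdivision]

@[simp]
lemma not_subdivision_adj_inl_inl {u v : V} : ¬ (subdivision G).Adj (.inl u) (.inl v) := by
  simp [subdivision]

@[simp]
lemma not_subdivision_adj_inr_inr {e e' : G.edgeSet} :
    ¬ (subdivision G).Adj (.inr e) (.inr e') := by
  simp [subdivision]

lemma two_mul_edist_le_length_of_subdivision_walk :
    ∀ {u v : V} (p : (subdivision G).Walk (.inl u) (.inl v)), 2 * G.edist u v ≤ p.length
  | _, _, .nil => by simp
  | _, _, .cons (v := .inl _) h _ => (not_subdivision_adj_inl_inl h).elim
  | _, _, .cons (v := .inr _) _ (.cons (v := .inr _) h _) => (not_subdivision_adj_inr_inr h).elim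
  | u, v, .cons (v := .inr e) h₁ (.cons (v := .inl w) h₂ p) => by
    have huw : G.edist u w ≤ 1 :=
      edist_le_one_of_mem_edge (subdivision_adj_inl_inr.mp h₁) (subdivision_adj_inr_inl.mp h₂)
    have hwv := two_mul_edist_le_length_of_subdivision_walk p
    calc 2 * G.edist u v ≤ 2 * (G.edist u w + G.edist w v) := by gcongr; exact G.edist_triangle
      _ ≤ 2 * (1 + G.edist w v) := by gcongr
      _ = 2 + 2 * G.edist w v := by ring
      _ ≤ 2 + p.length := by gcongr
      _ = (Walk.cons h₁ (Walk.cons h₂ p)).length := by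
        simp only [Walk.length_cons]; push_cast; ring
termination_by _ _ p => p.length

lemma two_mul_edist_le_edist_subdivision (u v : V) :
    2 * G.edist u v ≤ (subdivision G).edist (.inl u) (.inl v) := by
  by_cases hr : (subdivision G).Reachable (.inl u) (.inl v)
  · obtain ⟨p, hp⟩ := hr.exists_walk_length_eq_edist
    exact hp ▸ two_mul_edist_le_length_of_subdivision_walk p
  · simp [edist_eq_top_of_not_reachable hr]

lemma one_lt_edist_subdivision_inr {e e' : G.edgeSet} (he : e ≠ e') :
    1 < (subdivision G).edist (.inr e) (.inr e') :=
  one_lt_edist_of_ne_of_not_adj (Sum.inr_injective.ne he) not_subdivision_adj_inr_inr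

end SimpleGraph

lemma IsColoring1122.add_two_lt_two_mul_edist {V : Type*} {G : SimpleGraph V} {f : V → Fin 4}
    (hf : IsColoring1122 G f) {u v : V} (huv : u ≠ v) (hfuv : f u = f v) :
    ((f u : ℕ) : ℕ∞) + 2 < 2 * G.edist u v := by
  obtain ⟨h0, h1, h2, h3⟩ := hf
  have hpacking : (((f u : ℕ) / 2 + 1 : ℕ) : ℕ∞) < G.edist u v := by
    generalize hc : f u = c at hfuv
    fin_cases c
    · simpa using one_lt_edist_of_ne_of_not_adj huv (h0 u v hc hfuv.symm)
    · simpa using one_lt_edist_of_ne_of_not_adj huv (h1 u v hc hfuv.symm)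
    · simpa using h2 u v huv hc hfuv.symm
    · simpa using h3 u v huv hc hfuv.symm
  generalize G.edist u v = d at hpacking
  induction d using ENat.recTopCoe with
  | top => simpa [ENat.mul_top] using ENat.natCast_lt_top 2
  | coe d => norm_cast at hpacking ⊢; omega

/-- If a graph admits a `(1,1,2,2)`-packing coloring, then its subdivision admits a
`(1,2,3,4,5)`-packing coloring; in particular its subdivision has packing chromatic
number at most `5`. -/
theorem subdivision_12345_of_1122 {V : Type*} (G : SimpleGraph V)
    (h : ∃ f : V → Fin 4, IsColoring1122 G f) :
    ∃ g : V ⊕ G.edgeSet → Fin 5, IsColoring12345 (subdivision G) g := by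
  obtain ⟨f, hf⟩ := h
  refine ⟨Sum.elim (fun v => (f v).succ) (fun _ => 0), ?_⟩
  rintro (u | e) (v | e') hne heq
  · have huv : u ≠ v := ne_of_apply_ne Sum.inl hne
    have hfuv : f u = f v := Fin.succ_injective _ heq
    calc (((f u).succ : ℕ) : ℕ∞) + 1 = (f u : ℕ) + 2 := by push_cast [Fin.val_succ]; ring
      _ < 2 * G.edist u v := hf.add_two_lt_two_mul_edist huv hfuv
      _ ≤ (subdivision G).edist (.inl u) (.inl v) := two_mul_edist_le_edist_subdivision u v
  · exact absurd heq (Fin.succ_ne_zero _)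
  · exact absurd heq.symm (Fin.succ_ne_zero _)
  · simpa using one_lt_edist_subdivision_inr (G := G) (ne_of_apply_ne Sum.inr hne)
end
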